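/- Given five lattice points v1,...,v5 in Z^2 such that no three of them are collinear, there exists a lattice point in the convex hull of {v1,...,v5} that is not one of the five points themselves. -/

import Mathlib

/-!
Only four parity classes exist in `ℤ²`, so two of the five points share one and their midpoint
is a lattice point of the hull. It is none of the five points: the two endpoints differ (three
indices would otherwise span at most two points), so the midpoint is neither of them, and any
other point equal to it would be collinear with the endpoints.
-/

/-- Embedding of lattice points of `ℤ²` into the real plane. -/
def toR (p : ℤ × ℤ) : ℝ × ℝ := ((p.1 : ℝ), (p.2 : ℝ))

lemma toR_injective : Function.Injective toR :=
  Prod.map_injective.2 ⟨Int.cast_injective, Int.cast_injective⟩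

lemma Int.exists_two_mul_eq_add_of_modEq {a b : ℤ} (h : a ≡ b [ZMOD 2]) : ∃ c, a + b = 2 * c := by
  obtain ⟨d, hd⟩ := h.dvd
  exact ⟨a + d, by linarith⟩

lemma exists_toR_eq_midpoint {a b : ℤ × ℤ} (h₁ : a.1 ≡ b.1 [ZMOD 2]) (h₂ : a.2 ≡ b.2 [ZMOD 2]) :
    ∃ c, toR c = midpoint ℝ (toR a) (toR b) := by
  obtain ⟨c₁, hc₁⟩ := Int.exists_two_mul_eq_add_of_modEq h₁
  obtain ⟨c₂, hc₂⟩ := Int.exists_two_mul_eq_add_of_modEq h₂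
  refine ⟨(c₁, c₂), Prod.ext ?_ ?_⟩ <;>
    simp only [toR, midpoint_eq_smul_add, Prod.smul_mk, Prod.mk_add_mk, smul_eq_mul, invOf_eq_inv]
  · have : (a.1 : ℝ) + b.1 = 2 * c₁ := by exact_mod_cast hc₁
    rw [this]; ring
  · have : (a.2 : ℝ) + b.2 = 2 * c₂ := by exact_mod_cast hc₂
    rw [this]; ring

lemma exists_ne_modEq_two {ι : Type*} [Fintype ι] (hι : 4 < Fintype.card ι) (v : ι → ℤ × ℤ) :
    ∃ i j, i ≠ j ∧ (v i).1 ≡ (v j).1 [ZMOD 2] ∧ (v i).2 ≡ (v j).2 [ZMOD 2] := by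
  obtain ⟨i, j, hij, h⟩ := Fintype.exists_ne_map_eq_of_card_lt
    (fun i => (((v i).1 : ZMod 2), ((v i).2 : ZMod 2))) (by simpa using hι)
  simp only [Prod.mk.injEq, ZMod.intCast_eq_intCast_iff] at h
  exact ⟨i, j, hij, h⟩

/-- Given five lattice points `v 0, …, v 4` in `ℤ²` such that no three of them are
collinear, there is a lattice point in their convex hull distinct from all five. -/
theorem stmt0 (v : Fin 5 → ℤ × ℤ)
    (hcol : ∀ i j k : Fin 5, i ≠ j → j ≠ k → i ≠ k →
      ¬ Collinear ℝ ({toR (v i), toR (v j), toR (v k)} : Set (ℝ × ℝ))) :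
    ∃ w : ℤ × ℤ, toR w ∈ convexHull ℝ (Set.range (toR ∘ v)) ∧ ∀ i, w ≠ v i := by
  obtain ⟨i, j, hij, h₁, h₂⟩ := exists_ne_modEq_two (by simp) v
  obtain ⟨w, hw⟩ := exists_toR_eq_midpoint h₁ h₂
  have hwbtw : Wbtw ℝ (toR (v i)) (toR w) (toR (v j)) := hw ▸ wbtw_midpoint ℝ _ _
  refine ⟨w, segment_subset_convexHull (Set.mem_range_self i) (Set.mem_range_self j)
    (mem_segment_iff_wbtw.2 hwbtw), ?_⟩
  rintro k rfl
  have hvij : v i ≠ v j := by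
    obtain ⟨l, hli, hlj⟩ : ∃ l : Fin 5, l ≠ i ∧ l ≠ j :=
      (by decide : ∀ i j : Fin 5, ∃ l, l ≠ i ∧ l ≠ j) i j
    intro he
    apply hcol i j l hij hlj.symm hli.symm
    simpa [he] using collinear_pair ℝ (toR (v j)) (toR (v l))
  have hki : k ≠ i := by
    rintro rfl; exact hvij (toR_injective ((left_eq_midpoint_iff ℝ).1 hw))
  have hkj : k ≠ j := by
    rintro rfl; exact hvij (toR_injective ((right_eq_midpoint_iff ℝ).1 hw))
  exact hcol i j k hij hkj.symm hki.symm (Set.pair_comm (toR (v k)) _ ▸ hwbtw.collinear)
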